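/- For every state p ∈ S and every antichain T ⊆ S with p ∉ T, one has Σ_{i∈T∩sub(p)} π(i) ≤ (1−θ)·π(p); equivalently, the degeneracy parameter κ = 1 − Σ_{i∈T∩sub(p)} π(i)/π(p) satisfies κ ≥ θ. -/

import Mathlib

open scoped Classical
open Finset

/-- A finite tree-structured Markov chain: a finite state space partitioned into
levels `0, …, L-1`, a root `r` at level `0`, a parent map `pa` (with `pa r = r` by
convention), and transition probabilities `p i ∈ (0,1]` of being reached from the
parent, with `p r = 1`. -/
structure TreeMC (S : Type*) [Fintype S] [DecidableEq S] where
  /-- the number of levels -/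
  L : ℕ
  /-- the root -/
  r : S
  /-- the parent map (with `pa r = r` by convention) -/
  pa : S → S
  /-- the level of each state -/
  level : S → ℕ
  /-- the probability of being reached from the parent -/
  p : S → ℝ
  level_lt : ∀ i, level i < L
  level_r : level r = 0
  root_unique : ∀ i, level i = 0 → i = r
  pa_r : pa r = r
  level_pa : ∀ i, i ≠ r → level (pa i) + 1 = level i
  p_pos : ∀ i, 0 < p i
  p_le_one : ∀ i, p i ≤ 1
  p_r : p r = 1

namespace TreeMC

variable {S : Type*} [Fintype S] [DecidableEq S] (M : TreeMC S)

/-- The ancestors of `i`: states on the path from the root to `i` (both included). -/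
noncomputable def anc (i : S) : Finset S :=
  Finset.univ.filter fun a => ∃ n : ℕ, M.pa^[n] i = a

/-- The subtree of `i`: all states having `i` as an ancestor. -/
noncomputable def subt (i : S) : Finset S :=
  Finset.univ.filter fun k => i ∈ M.anc k

/-- The subtree of a set of states. -/
noncomputable def subF (X : Finset S) : Finset S :=
  Finset.univ.filter fun k => ∃ i ∈ X, k ∈ M.subt i

/-- `π i`: the probability that a job passes through state `i`. -/
noncomputable def pi (i : S) : ℝ :=
  ∏ a ∈ M.anc i, M.p a

/-- The children of `i`. -/
noncomputable def child (i : S) : Finset S :=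
  Finset.univ.filter fun k => k ≠ M.r ∧ M.pa k = i

/-- `T` is the top set of `X`: a subset of `X` whose subtree covers `X` and in which
no state lies in the subtree of a different state. -/
def IsTopSet (X T : Finset S) : Prop :=
  T ⊆ X ∧ X ⊆ M.subF T ∧ ∀ i ∈ T, ∀ k ∈ T, i ≠ k → k ∉ M.subt i

/-- Expected future cost conditional on being in state `a`. -/
noncomputable def cf (c : S → ℝ) (a : S) : ℝ :=
  ∑ i ∈ M.subt a, c i * M.pi i / M.pi a

/-- `V` is the ski-rental value function:
`V γ i = min (γ, c i + Σ_{k ∈ child i} p k · V γ k)`. -/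
def IsSkiValue (c : S → ℝ) (V : ℝ → S → ℝ) : Prop :=
  ∀ γ : ℝ, ∀ i : S, V γ i = min γ (c i + ∑ k ∈ M.child i, M.p k * V γ k)

/-- Expected future cost-to-go `V^f`. -/
noncomputable def Vf (V : ℝ → S → ℝ) (γ : ℝ) (i : S) : ℝ :=
  ∑ k ∈ M.child i, M.p k * V γ k

/-- The candidate optimal state duals `β*(γ)`. -/
noncomputable def betaStar (c : S → ℝ) (V : ℝ → S → ℝ) (γ : ℝ) (i : S) : ℝ :=
  max 0 (c i + M.Vf V γ i - γ)

/-- Feasibility for the dual program `D*(γ)`. -/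
def DualFeasible (c : S → ℝ) (γ : ℝ) (β : S → ℝ) : Prop :=
  (∀ i, 0 ≤ β i) ∧ ∀ a, M.cf c a ≤ γ + ∑ i ∈ M.subt a, β i * M.pi i / M.pi a

/-- Feasibility for the fluid LP (OriginalFluid). -/
def OrigFeasible (lam mu : ℝ) (q ν : S → ℝ) : Prop :=
  (∀ i, 0 ≤ q i) ∧ (∀ i, 0 ≤ ν i) ∧ q M.r = lam ∧
    (∀ i, i ≠ M.r → q i = (q (M.pa i) - ν (M.pa i)) * M.p i) ∧
    (∀ i, ν i ≤ q i) ∧ ∑ i : S, ν i ≤ mu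

/-- Feasibility for the fluid LP (SimplerFluid). -/
def SimpFeasible (lam mu : ℝ) (ν : S → ℝ) : Prop :=
  (∀ i, 0 ≤ ν i) ∧ (∀ i, ∑ a ∈ M.anc i, ν a * M.pi i / M.pi a ≤ lam * M.pi i) ∧
    ∑ i : S, ν i ≤ mu

end TreeMC

/-!
By induction from the leaves, an antichain carries mass at
most `π q` inside `sub q`: either `q` itself is in it, or the mass splits over the disjoint subtrees
of the children, each bounded by `π k`, and `∑ π k = (∑ p k) π q ≤ π q`. If `q` is not in the
antichain, the same splitting step already gives the sharper bound `(∑ p k) π q ≤ (1 - θ) π q`.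
-/

namespace TreeMC

variable {S : Type*} [Fintype S] [DecidableEq S] (M : TreeMC S)

@[simp]
lemma mem_anc {a i : S} : a ∈ M.anc i ↔ ∃ n, M.pa^[n] i = a := by
  simp [anc]

@[simp]
lemma mem_subt {k i : S} : k ∈ M.subt i ↔ i ∈ M.anc k := by
  simp [subt]

@[simp]
lemma mem_child {k i : S} : k ∈ M.child i ↔ k ≠ M.r ∧ M.pa k = i := by
  simp [child]

lemma self_mem_anc (i : S) : i ∈ M.anc i :=
  M.mem_anc.2 ⟨0, rfl⟩

lemma self_mem_subt (i : S) : i ∈ M.subt i :=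
  M.mem_subt.2 (M.self_mem_anc i)

lemma pa_mem_anc (i : S) : M.pa i ∈ M.anc i :=
  M.mem_anc.2 ⟨1, rfl⟩

lemma anc_subset_anc {a i : S} (h : a ∈ M.anc i) : M.anc a ⊆ M.anc i := by
  intro b hb
  obtain ⟨n, rfl⟩ := M.mem_anc.1 h
  obtain ⟨m, rfl⟩ := M.mem_anc.1 hb
  exact M.mem_anc.2 ⟨m + n, Function.iterate_add_apply _ _ _ _⟩

lemma anc_eq_insert_anc_pa (i : S) : M.anc i = insert i (M.anc (M.pa i)) := by
  ext a
  simp only [mem_insert, mem_anc]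
  constructor
  · rintro ⟨_ | n, rfl⟩
    · exact Or.inl rfl
    · exact Or.inr ⟨n, rfl⟩
  · rintro (rfl | ⟨n, rfl⟩)
    · exact ⟨0, rfl⟩
    · exact ⟨n + 1, rfl⟩

lemma level_pa_le (i : S) : M.level (M.pa i) ≤ M.level i := by
  by_cases hi : i = M.r
  · rw [hi, M.pa_r]
  · have := M.level_pa i hi
    omega

lemma level_le_of_mem_anc {a i : S} (h : a ∈ M.anc i) : M.level a ≤ M.level i := by
  obtain ⟨n, rfl⟩ := M.mem_anc.1 h
  induction n with
  | zero => exact le_rfl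
  | succ n ih =>
    rw [Function.iterate_succ_apply']
    exact (M.level_pa_le _).trans (ih (M.mem_anc.2 ⟨n, rfl⟩))

lemma level_of_mem_child {k q : S} (hk : k ∈ M.child q) : M.level k = M.level q + 1 := by
  obtain ⟨hkr, rfl⟩ := M.mem_child.1 hk
  exact (M.level_pa k hkr).symm

lemma notMem_anc_pa {i : S} (hi : i ≠ M.r) : i ∉ M.anc (M.pa i) := fun h => by
  have := M.level_le_of_mem_anc h
  have := M.level_pa i hi
  omega

lemma mem_anc_or_mem_anc {a b i : S} (ha : a ∈ M.anc i) (hb : b ∈ M.anc i) :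
    a ∈ M.anc b ∨ b ∈ M.anc a := by
  obtain ⟨n, rfl⟩ := M.mem_anc.1 ha
  obtain ⟨m, rfl⟩ := M.mem_anc.1 hb
  rcases le_total n m with h | h
  · refine Or.inr (M.mem_anc.2 ⟨m - n, ?_⟩)
    rw [← Function.iterate_add_apply, Nat.sub_add_cancel h]
  · refine Or.inl (M.mem_anc.2 ⟨n - m, ?_⟩)
    rw [← Function.iterate_add_apply, Nat.sub_add_cancel h]

lemma exists_mem_child_mem_anc {q i : S} (hq : q ∈ M.anc i) (hi : i ≠ q) :
    ∃ k ∈ M.child q, k ∈ M.anc i := by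
  obtain ⟨n, hn⟩ := M.mem_anc.1 hq
  induction n generalizing i with
  | zero => exact absurd hn hi
  | succ n ih =>
    rw [Function.iterate_succ_apply] at hn
    by_cases hpa : M.pa i = q
    · have hir : i ≠ M.r := fun hir => hi (by rw [← hpa, hir, M.pa_r])
      exact ⟨i, M.mem_child.2 ⟨hir, hpa⟩, M.self_mem_anc i⟩
    · obtain ⟨k, hk, hki⟩ := ih (M.mem_anc.2 ⟨n, hn⟩) hpa hn
      exact ⟨k, hk, M.anc_subset_anc (M.pa_mem_anc i) hki⟩

lemma subt_eq_insert_biUnion_child (q : S) :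
    M.subt q = insert q ((M.child q).biUnion M.subt) := by
  ext i
  simp only [mem_insert, mem_biUnion]
  constructor
  · intro hi
    by_cases hiq : i = q
    · exact Or.inl hiq
    · obtain ⟨k, hk, hki⟩ := M.exists_mem_child_mem_anc (M.mem_subt.1 hi) hiq
      exact Or.inr ⟨k, hk, M.mem_subt.2 hki⟩
  · rintro (rfl | ⟨k, hk, hik⟩)
    · exact M.self_mem_subt i
    · obtain ⟨-, rfl⟩ := M.mem_child.1 hk
      exact M.mem_subt.2 (M.anc_subset_anc (M.mem_subt.1 hik) (M.pa_mem_anc k))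

lemma eq_of_mem_child_of_mem_anc {k k' q : S} (hk : k ∈ M.child q) (hk' : k' ∈ M.child q)
    (h : k ∈ M.anc k') : k = k' := by
  obtain ⟨hkr, rfl⟩ := M.mem_child.1 hk
  obtain ⟨-, hpa⟩ := M.mem_child.1 hk'
  rw [M.anc_eq_insert_anc_pa k', hpa, mem_insert] at h
  exact h.resolve_right (M.notMem_anc_pa hkr)

lemma pairwiseDisjoint_subt_child (q : S) : (M.child q : Set S).PairwiseDisjoint M.subt := by
  intro k hk k' hk' hne
  refine Finset.disjoint_left.2 fun i hik hik' => hne ?_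
  rcases M.mem_anc_or_mem_anc (M.mem_subt.1 hik) (M.mem_subt.1 hik') with h | h
  · exact M.eq_of_mem_child_of_mem_anc hk hk' h
  · exact (M.eq_of_mem_child_of_mem_anc hk' hk h).symm

lemma pi_eq_p_mul_pi_pa {k : S} (hk : k ≠ M.r) : M.pi k = M.p k * M.pi (M.pa k) := by
  rw [pi, M.anc_eq_insert_anc_pa k, prod_insert (M.notMem_anc_pa hk), pi]

lemma pi_pos (i : S) : 0 < M.pi i :=
  prod_pos fun a _ => M.p_pos a

lemma sum_pi_child (q : S) : ∑ k ∈ M.child q, M.pi k = (∑ k ∈ M.child q, M.p k) * M.pi q := by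
  rw [sum_mul]
  refine sum_congr rfl fun k hk => ?_
  obtain ⟨hkr, rfl⟩ := M.mem_child.1 hk
  exact M.pi_eq_p_mul_pi_pa hkr

lemma sum_inter_subt_of_notMem {T : Finset S} {q : S} (hq : q ∉ T) (f : S → ℝ) :
    ∑ i ∈ T ∩ M.subt q, f i = ∑ k ∈ M.child q, ∑ i ∈ T ∩ M.subt k, f i := by
  rw [M.subt_eq_insert_biUnion_child, inter_insert_of_notMem hq, inter_biUnion,
    sum_biUnion ((M.pairwiseDisjoint_subt_child q).mono fun _ => inter_subset_right)]

lemma inter_subt_of_mem {T : Finset S} (hT : IsAntichain (fun a b => b ∈ M.subt a) (T : Set S))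
    {q : S} (hq : q ∈ T) : T ∩ M.subt q = {q} := by
  ext i
  simp only [mem_inter, mem_singleton]
  constructor
  · rintro ⟨hiT, hiq⟩
    by_contra hne
    exact hT hq hiT (Ne.symm hne) hiq
  · rintro rfl
    exact ⟨hq, M.self_mem_subt i⟩

lemma sum_inter_subt_pi_le_pi (hp : ∀ i, ∑ k ∈ M.child i, M.p k ≤ 1) {T : Finset S}
    (hT : IsAntichain (fun a b => b ∈ M.subt a) (T : Set S)) (q : S) :
    ∑ i ∈ T ∩ M.subt q, M.pi i ≤ M.pi q := by
  by_cases hq : q ∈ T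
  · rw [M.inter_subt_of_mem hT hq, sum_singleton]
  calc ∑ i ∈ T ∩ M.subt q, M.pi i
      = ∑ k ∈ M.child q, ∑ i ∈ T ∩ M.subt k, M.pi i := M.sum_inter_subt_of_notMem hq _
    _ ≤ ∑ k ∈ M.child q, M.pi k := sum_le_sum fun k hk => sum_inter_subt_pi_le_pi hp hT k
    _ = (∑ k ∈ M.child q, M.p k) * M.pi q := M.sum_pi_child q
    _ ≤ M.pi q := mul_le_of_le_one_left (M.pi_pos q).le (hp q)
termination_by M.L - M.level q
decreasing_by
  have := M.level_of_mem_child hk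
  have := M.level_lt k
  omega

lemma sum_inter_subt_pi_le_of_notMem (hp : ∀ i, ∑ k ∈ M.child i, M.p k ≤ 1) {T : Finset S}
    (hT : IsAntichain (fun a b => b ∈ M.subt a) (T : Set S)) {q : S} (hq : q ∉ T) :
    ∑ i ∈ T ∩ M.subt q, M.pi i ≤ (∑ k ∈ M.child q, M.p k) * M.pi q := by
  rw [M.sum_inter_subt_of_notMem hq, ← M.sum_pi_child]
  exact sum_le_sum fun k _ => M.sum_inter_subt_pi_le_pi hp hT k

end TreeMC

/-- For every state `p ∈ S` and every antichain `T ⊆ S` with `p ∉ T`,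
`Σ_{i ∈ T ∩ sub(p)} π(i) ≤ (1 − θ)·π(p)`; equivalently, the degeneracy parameter
`κ = 1 − Σ_{i ∈ T ∩ sub(p)} π(i)/π(p)` satisfies `κ ≥ θ`. -/
theorem antichain_partial_mass {S : Type*} [Fintype S] [DecidableEq S]
    (M : TreeMC S) (θ : ℝ)
    (hθdef : θ = Finset.univ.inf' ⟨M.r, Finset.mem_univ M.r⟩
      (fun i => 1 - ∑ k ∈ M.child i, M.p k))
    (hθpos : 0 < θ)
    (pnode : S) (T : Finset S)
    (hT : ∀ a ∈ T, ∀ b ∈ T, a ≠ b → b ∉ M.subt a)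
    (hpT : pnode ∉ T) :
    ∑ i ∈ T ∩ M.subt pnode, M.pi i ≤ (1 - θ) * M.pi pnode ∧
      θ ≤ 1 - (∑ i ∈ T ∩ M.subt pnode, M.pi i) / M.pi pnode := by
  have hθ_le (i : S) : θ ≤ 1 - ∑ k ∈ M.child i, M.p k :=
    hθdef ▸ inf'_le _ (mem_univ i)
  have hp (i : S) : ∑ k ∈ M.child i, M.p k ≤ 1 := by linarith [hθ_le i]
  have hmass : ∑ i ∈ T ∩ M.subt pnode, M.pi i ≤ (1 - θ) * M.pi pnode :=
    (M.sum_inter_subt_pi_le_of_notMem hp (fun a ha b hb hab => hT a ha b hb hab) hpT).trans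
      (mul_le_mul_of_nonneg_right (by linarith [hθ_le pnode]) (M.pi_pos pnode).le)
  refine ⟨hmass, ?_⟩
  rw [le_sub_comm, div_le_iff₀ (M.pi_pos pnode)]
  linarith
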